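/- arXiv:1910.09014 — 4 statements merged into one kernel-verified Lean document; each statement's English description precedes it below -/
import Mathlib

section
/- Let V be a finite set, let (X_i : i ∈ V) be random variables with joint distribution P, and let G* be a DMAG on V that is an IMAP of P. Suppose P is adjacency-faithful to G*. If G minimizes the number of edges among all DMAGs on V that are IMAPs of P, then skel(G) = skel(G*). -/
open MeasureTheory ProbabilityTheory

/-- A mixed graph with directed and bidirected edges, no self-loops, and at most one
edge between any pair of vertices. -/
structure MixedGraph (V : Type*) where
  dir : V → V → Prop
  bidir : V → V → Prop
  bidir_symm : ∀ i j, bidir i j → bidir j i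
  dir_irrefl : ∀ i, ¬ dir i i
  bidir_irrefl : ∀ i, ¬ bidir i i
  not_dir_dir : ∀ i j, dir i j → ¬ dir j i
  not_dir_bidir : ∀ i j, dir i j → ¬ bidir i j

namespace MixedGraph

variable {V : Type*}

/-- `i` and `j` are adjacent (joined by some edge). -/
def adj (G : MixedGraph V) (i j : V) : Prop := G.dir i j ∨ G.dir j i ∨ G.bidir i j

lemma adj_symm (G : MixedGraph V) {i j : V} (h : G.adj i j) : G.adj j i := by
  rcases h with h | h | h
  · exact Or.inr (Or.inl h)
  · exact Or.inl h
  · exact Or.inr (Or.inr (G.bidir_symm i j h))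

/-- There is an edge between `a` and `k` with an arrowhead at `k`. -/
def arrowAt (G : MixedGraph V) (a k : V) : Prop := G.dir a k ∨ G.bidir a k

/-- `k` is a collider on the path segment `x - k - y`: both incident edges have an
arrowhead at `k`. -/
def IsCollider (G : MixedGraph V) (x k y : V) : Prop := G.arrowAt x k ∧ G.arrowAt y k

/-- `i` is an ancestor of `j`: there is a (possibly trivial) directed path from `i` to `j`. -/
def Anc (G : MixedGraph V) (i j : V) : Prop := Relation.ReflTransGen G.dir i j

/-- There is a nonempty directed path from `i` to `j`. -/
def StrAnc (G : MixedGraph V) (i j : V) : Prop := Relation.TransGen G.dir i j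

/-- `G` has no directed cycles. -/
def Acyclic (G : MixedGraph V) : Prop := ∀ i, ¬ G.StrAnc i i

/-- `G` is a directed ancestral graph: no directed cycles, and no directed path between
the endpoints of a bidirected edge. -/
def IsAncestral (G : MixedGraph V) : Prop :=
  G.Acyclic ∧ ∀ i j, G.bidir i j → ¬ G.StrAnc i j

end MixedGraph

/-- A path in a mixed graph from `a` to `b`: a nonempty list of distinct vertices,
consecutive ones adjacent. Since there is at most one edge between any pair of
vertices, the list of vertices determines the edges of the path. -/
structure MPath {V : Type*} (G : MixedGraph V) (a b : V) where
  verts : List V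
  ne_nil : verts ≠ []
  head_eq : verts.head ne_nil = a
  last_eq : verts.getLast ne_nil = b
  nodup : verts.Nodup
  chain : verts.Chain' G.adj

namespace MixedGraph

variable {V : Type*}

/-- The path `p` is m-connecting given `C`: every non-collider strictly inside `p` lies
outside `C` and every collider strictly inside `p` is an ancestor of some element of `C`. -/
def MConnecting (G : MixedGraph V) {a b : V} (C : Set V) (p : MPath G a b) : Prop :=
  ∀ (m : ℕ) (h : m + 2 < p.verts.length),
    (G.IsCollider (p.verts[m]'(by omega)) (p.verts[m+1]'(by omega)) (p.verts[m+2]'h) →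
        ∃ c ∈ C, G.Anc (p.verts[m+1]'(by omega)) c) ∧
    (¬ G.IsCollider (p.verts[m]'(by omega)) (p.verts[m+1]'(by omega)) (p.verts[m+2]'h) →
        p.verts[m+1]'(by omega) ∉ C)

/-- m-separation: `A ⊥_G B | C`, i.e. there is no m-connecting path given `C` from a
member of `A` to a member of `B`. -/
def MSep (G : MixedGraph V) (A B C : Set V) : Prop :=
  ∀ a ∈ A, ∀ b ∈ B, ∀ p : MPath G a b, ¬ G.MConnecting C p

/-- `i` and `j` are m-connected given `C`: there is an m-connecting path between them. -/
def MConn (G : MixedGraph V) (i j : V) (C : Set V) : Prop :=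
  (∃ p : MPath G i j, G.MConnecting C p) ∨ (∃ p : MPath G j i, G.MConnecting C p)

/-- A directed ancestral graph is maximal if every non-adjacent pair of vertices can be
m-separated by some set not containing either of them. -/
def IsMaximal (G : MixedGraph V) : Prop :=
  ∀ i j : V, i ≠ j → ¬ G.adj i j → ∃ S : Set V, i ∉ S ∧ j ∉ S ∧ G.MSep {i} {j} S

/-- A directed maximal ancestral graph. -/
def IsDMAG (G : MixedGraph V) : Prop := G.IsAncestral ∧ G.IsMaximal

/-- `G` and `H` are Markov equivalent: they have the same m-separation statements,
`I(G) = I(H)`. -/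
def MarkovEquiv (G H : MixedGraph V) : Prop :=
  ∀ A B C : Set V, Disjoint A B → Disjoint A C → Disjoint B C →
    (G.MSep A B C ↔ H.MSep A B C)

/-- The number of edges `|G| = |D| + |B|`; since there is at most one edge between any
pair of vertices this is the number of adjacent unordered pairs. -/
noncomputable def numEdges (G : MixedGraph V) : ℕ :=
  Nat.card {s : Sym2 V // ∃ i j : V, s = s(i, j) ∧ G.adj i j}

/-- `G` and `H` have the same skeleton. -/
def SameSkel (G H : MixedGraph V) : Prop := ∀ i j : V, G.adj i j ↔ H.adj i j

/-- The path `p` from `i` to `j` is discriminating for `k`: `i,j` are non-adjacent, `k` is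
the second-to-last vertex, there is at least one vertex strictly between `i` and `k`, and
every vertex strictly between `i` and `k` is a collider on the path and a parent of `j`. -/
def IsDiscriminatingFor (G : MixedGraph V) {i j : V} (p : MPath G i j) (k : V) : Prop :=
  ¬ G.adj i j ∧
  ∃ h4 : 4 ≤ p.verts.length,
    p.verts[p.verts.length - 2]'(by omega) = k ∧
    ∀ (m : ℕ) (_hm1 : 1 ≤ m) (_hm2 : m + 3 ≤ p.verts.length),
      G.IsCollider (p.verts[m-1]'(by omega)) (p.verts[m]'(by omega)) (p.verts[m+1]'(by omega)) ∧
      G.dir (p.verts[m]'(by omega)) j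

/-- The second-to-last vertex of the path `p` is a collider on `p`. -/
def ColliderAtSecondLast (G : MixedGraph V) {a b : V} (p : MPath G a b) : Prop :=
  ∃ _h3 : 3 ≤ p.verts.length,
    G.IsCollider (p.verts[p.verts.length - 3]'(by omega))
      (p.verts[p.verts.length - 2]'(by omega)) (p.verts[p.verts.length - 1]'(by omega))

/-- `i` and `j` cannot be m-separated in `G` by any set avoiding them. -/
def Insep (G : MixedGraph V) (i j : V) : Prop :=
  ∀ S : Set V, i ∉ S → j ∉ S → ¬ G.MSep {i} {j} S ∧ ¬ G.MSep {j} {i} S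

end MixedGraph

open MixedGraph

/-- The maximal closure `G̅` of an ancestral graph `G`: add an edge between every
non-adjacent inseparable pair, with the mark determined by the ancestor relations
(so that the result stays ancestral and has the same m-separations). -/
def maximalClosure {V : Type*} (G : MixedGraph V) : MixedGraph V where
  dir i j := G.dir i j ∨ (¬ G.adj i j ∧ i ≠ j ∧ G.Insep i j ∧ G.StrAnc i j ∧ ¬ G.StrAnc j i)
  bidir i j := G.bidir i j ∨ (¬ G.adj i j ∧ i ≠ j ∧ G.Insep i j ∧ ¬ G.StrAnc i j ∧ ¬ G.StrAnc j i)
  bidir_symm i j h := by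
    rcases h with h | ⟨hadj, hne, hins, h1, h2⟩
    · exact Or.inl (G.bidir_symm i j h)
    · exact Or.inr ⟨fun hc => hadj (G.adj_symm hc), hne.symm,
        fun S hS1 hS2 => (hins S hS2 hS1).symm, h2, h1⟩
  dir_irrefl i h := by
    rcases h with h | ⟨_, hne, _⟩
    · exact G.dir_irrefl i h
    · exact hne rfl
  bidir_irrefl i h := by
    rcases h with h | ⟨_, hne, _⟩
    · exact G.bidir_irrefl i h
    · exact hne rfl
  not_dir_dir i j h h' := by
    rcases h with h | ⟨hadj, hne, hins, h1, h2⟩ <;>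
      rcases h' with h' | ⟨hadj', hne', hins', h1', h2'⟩
    · exact G.not_dir_dir i j h h'
    · exact hadj' (Or.inr (Or.inl h))
    · exact hadj (Or.inr (Or.inl h'))
    · exact h2 h1'
  not_dir_bidir i j h h' := by
    rcases h with h | ⟨hadj, hne, hins, h1, h2⟩ <;>
      rcases h' with h' | ⟨hadj', hne', hins', h1', h2'⟩
    · exact G.not_dir_bidir i j h h'
    · exact hadj' (Or.inl h)
    · exact hadj (Or.inr (Or.inr h'))
    · exact h1' h1

/-- A partially ordered set structure (poset) on the ground set `V`: a reflexive,
transitive, antisymmetric relation. -/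
structure FinPoset (V : Type*) where
  le : V → V → Prop
  le_refl : ∀ a, le a a
  le_trans : ∀ a b c, le a b → le b c → le a c
  le_antisymm : ∀ a b, le a b → le b a → a = b

namespace FinPoset

/-- `pre_π(i,j) = {x : x ≤ i or x ≤ j}`. -/
def pre {V : Type*} (π : FinPoset V) (i j : V) : Set V := {x | π.le x i ∨ π.le x j}

lemma pre_comm {V : Type*} (π : FinPoset V) (i j : V) : π.pre j i = π.pre i j := by
  ext x; exact or_comm

end FinPoset

/-- The poset `po(G)` associated to an acyclic mixed graph: `i ≤ j` iff `i` is an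
ancestor of `j` in `G`. -/
def po {V : Type*} (G : MixedGraph V) (hG : G.Acyclic) : FinPoset V where
  le := G.Anc
  le_refl _ := Relation.ReflTransGen.refl
  le_trans _ _ _ h1 h2 := Relation.ReflTransGen.trans h1 h2
  le_antisymm a b hab hba := by
    by_contra hne
    rcases hab.cases_head with h | ⟨c, hac, hcb⟩
    · exact hne h
    · exact hG a (Relation.TransGen.head' hac (hcb.trans hba))

/-- The empty poset: all distinct elements are incomparable. -/
def emptyPoset (V : Type*) : FinPoset V :=
  ⟨Eq, fun _ => rfl, fun _ _ _ h1 h2 => h1.trans h2, fun _ _ h _ => h⟩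
section Probability

variable {V : Type*} {Ω : Type*} [MeasurableSpace Ω] [StandardBorelSpace Ω]

/-- Conditional independence `X_A ⊥⊥ X_B | X_C` under the distribution of the random
vector `X`: the joint random vectors `(X_i : i ∈ A)` and `(X_i : i ∈ B)` are
conditionally independent given the σ-algebra generated by `(X_i : i ∈ C)`. -/
def CI (μ : MeasureTheory.Measure Ω) [MeasureTheory.IsFiniteMeasure μ]
    (X : V → Ω → ℝ) (hX : ∀ i, Measurable (X i)) (A B C : Set V) : Prop :=
  ProbabilityTheory.CondIndepFun
    (MeasurableSpace.comap (fun ω => fun i : C => X i ω) MeasurableSpace.pi)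
    (Measurable.comap_le (measurable_pi_iff.mpr fun i : C => hX i))
    (fun ω => fun i : A => X i ω) (fun ω => fun i : B => X i ω) μ

/-- `X_i` and `X_j` are conditionally dependent given `X_S` (stated symmetrically). -/
def CondDep (μ : MeasureTheory.Measure Ω) [MeasureTheory.IsFiniteMeasure μ]
    (X : V → Ω → ℝ) (hX : ∀ i, Measurable (X i)) (i j : V) (S : Set V) : Prop :=
  ¬ CI μ X hX {i} {j} S ∨ ¬ CI μ X hX {j} {i} S

variable (μ : MeasureTheory.Measure Ω) [MeasureTheory.IsFiniteMeasure μ]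
    (X : V → Ω → ℝ) (hX : ∀ i, Measurable (X i))

/-- `G` is an independence map (IMAP) of the distribution of `X`: every m-separation in
`G` implies the corresponding conditional independence. -/
def IsIMAP (G : MixedGraph V) : Prop :=
  ∀ A B C : Set V, Disjoint A B → Disjoint A C → Disjoint B C →
    G.MSep A B C → CI μ X hX A B C

/-- Delete the directed edge `i → j` from `G`. -/
def deleteDir {V : Type*} (G : MixedGraph V) (i j : V) : MixedGraph V where
  dir a b := G.dir a b ∧ ¬(a = i ∧ b = j)
  bidir := G.bidir
  bidir_symm := G.bidir_symm
  dir_irrefl a h := G.dir_irrefl a h.1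
  bidir_irrefl := G.bidir_irrefl
  not_dir_dir a b h h' := G.not_dir_dir a b h.1 h'.1
  not_dir_bidir a b h := G.not_dir_bidir a b h.1

/-- Delete the bidirected edge `i ↔ j` from `G`. -/
def deleteBidir {V : Type*} (G : MixedGraph V) (i j : V) : MixedGraph V where
  dir := G.dir
  bidir a b := G.bidir a b ∧ ¬((a = i ∧ b = j) ∨ (a = j ∧ b = i))
  bidir_symm a b h := ⟨G.bidir_symm a b h.1, by tauto⟩
  dir_irrefl := G.dir_irrefl
  bidir_irrefl a h := G.bidir_irrefl a h.1
  not_dir_dir := G.not_dir_dir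
  not_dir_bidir a b h h' := G.not_dir_bidir a b h h'.1

/-- `G` is a minimal IMAP of the distribution of `X`: `G` is a DMAG and an IMAP, and no
single edge of `G` can be deleted while keeping the graph both maximal and an IMAP. -/
def IsMinimalIMAP (G : MixedGraph V) : Prop :=
  G.IsDMAG ∧ IsIMAP μ X hX G ∧
  (∀ i j, G.dir i j →
    ¬((deleteDir G i j).IsMaximal ∧ IsIMAP μ X hX (deleteDir G i j))) ∧
  (∀ i j, G.bidir i j →
    ¬((deleteBidir G i j).IsMaximal ∧ IsIMAP μ X hX (deleteBidir G i j)))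

/-- Adjacency-faithfulness: endpoints of any edge of `G` are conditionally dependent
given any set avoiding them. -/
def AdjFaithful (G : MixedGraph V) : Prop :=
  ∀ i j, G.adj i j → ∀ S : Set V, i ∉ S → j ∉ S → CondDep μ X hX i j S

/-- Orientation-faithfulness: for any unshielded triple `i - k - j` of the skeleton of
`G`, if `i` and `j` are m-connected given `S` then `X_i` and `X_j` are conditionally
dependent given `X_S`. -/
def OrientFaithful (G : MixedGraph V) : Prop :=
  ∀ i k j : V, i ≠ j → G.adj i k → G.adj k j → ¬ G.adj i j →
    ∀ S : Set V, i ∉ S → j ∉ S → G.MConn i j S → CondDep μ X hX i j S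

/-- Discriminating-faithfulness: for the endpoints `i, j` of any discriminating path of
`G`, if `i` and `j` are m-connected given `S` then `X_i` and `X_j` are conditionally
dependent given `X_S`. -/
def DiscrFaithful (G : MixedGraph V) : Prop :=
  ∀ (i j k : V) (p : MPath G i j), G.IsDiscriminatingFor p k →
    ∀ S : Set V, i ∉ S → j ∉ S → G.MConn i j S → CondDep μ X hX i j S

/-- The distribution of `X` is restricted-faithful to `G`. -/
def RestrictedFaithful (G : MixedGraph V) : Prop :=
  IsIMAP μ X hX G ∧ AdjFaithful μ X hX G ∧ OrientFaithful μ X hX G ∧ DiscrFaithful μ X hX G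

/-- The distribution of `X` is faithful to `G`: m-separation holds iff the corresponding
conditional independence holds. -/
def Faithful (G : MixedGraph V) : Prop :=
  ∀ A B C : Set V, Disjoint A B → Disjoint A C → Disjoint B C →
    (G.MSep A B C ↔ CI μ X hX A B C)

/-- The graph `AG(π, P)` associated to a poset `π` and the distribution `P` of `X`. -/
def AGdist (π : FinPoset V) : MixedGraph V where
  dir i j := π.le i j ∧ i ≠ j ∧ CondDep μ X hX i j (π.pre i j \ {i, j})
  bidir i j := ¬ π.le i j ∧ ¬ π.le j i ∧ CondDep μ X hX i j (π.pre i j \ {i, j})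
  bidir_symm i j h := by
    refine ⟨h.2.1, h.1, ?_⟩
    rw [π.pre_comm, Set.pair_comm j i]
    exact h.2.2.symm
  dir_irrefl i h := h.2.1 rfl
  bidir_irrefl i h := h.1 (π.le_refl i)
  not_dir_dir i j h h' := h.2.1 (π.le_antisymm i j h.1 h'.1)
  not_dir_bidir i j h h' := h'.1 h.1

lemma AGdist_acyclic (π : FinPoset V) : (AGdist μ X hX π).Acyclic := by
  have key : ∀ a b, (AGdist μ X hX π).StrAnc a b → π.le a b ∧ a ≠ b := by
    intro a b h
    induction h with
    | single h => exact ⟨h.1, h.2.1⟩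
    | tail _ h2 ih =>
        refine ⟨π.le_trans _ _ _ ih.1 h2.1, fun hac => ?_⟩
        subst hac
        exact h2.2.1 (π.le_antisymm _ _ h2.1 ih.1)
  exact fun i hi => (key i i hi).2 rfl

/-- `G_π`: the maximal closure of `AG(po(AG(π, P)), P)`, a minimal IMAP of the
distribution `P` of `X` associated to the poset `π`. -/
def Gpi (π : FinPoset V) : MixedGraph V :=
  maximalClosure (AGdist μ X hX (po (AGdist μ X hX π) (AGdist_acyclic μ X hX π)))

end Probability

section GraphVersion

variable {V : Type*}

/-- The graph `AG(π, G)` associated to a poset `π`, with conditional (in)dependence read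
off from m-separation in a graph `G` (used when the distribution is faithful to `G`). -/
def AGgraph (π : FinPoset V) (G : MixedGraph V) : MixedGraph V where
  dir i j := π.le i j ∧ i ≠ j ∧ G.MConn i j (π.pre i j \ {i, j})
  bidir i j := ¬ π.le i j ∧ ¬ π.le j i ∧ G.MConn i j (π.pre i j \ {i, j})
  bidir_symm i j h := by
    refine ⟨h.2.1, h.1, ?_⟩
    rw [π.pre_comm, Set.pair_comm j i]
    exact h.2.2.symm
  dir_irrefl i h := h.2.1 rfl
  bidir_irrefl i h := h.1 (π.le_refl i)
  not_dir_dir i j h h' := h.2.1 (π.le_antisymm i j h.1 h'.1)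
  not_dir_bidir i j h h' := h'.1 h.1

/-- `H` is an independence map of the graph `G`: every m-separation of `H` is an
m-separation of `G`. -/
def GraphIMAP (H G : MixedGraph V) : Prop :=
  ∀ A B C : Set V, Disjoint A B → Disjoint A C → Disjoint B C →
    H.MSep A B C → G.MSep A B C

/-- A complete DMAG: a DMAG whose skeleton is the complete graph. -/
def IsCompleteDMAG (G : MixedGraph V) : Prop :=
  G.IsDMAG ∧ ∀ i j : V, i ≠ j → G.adj i j

end GraphVersion


/-- Theorem 1(a): under adjacency-faithfulness, any sparsest IMAP has
the same skeleton as the true DMAG. -/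
theorem sparsest_imap_skeleton {V : Type*} [Fintype V] {Ω : Type*} [MeasurableSpace Ω]
    [StandardBorelSpace Ω] [Nonempty Ω] (μ : MeasureTheory.Measure Ω)
    [MeasureTheory.IsProbabilityMeasure μ] (X : V → Ω → ℝ) (hX : ∀ i, Measurable (X i))
    (Gstar : MixedGraph V) (hGstar : Gstar.IsDMAG)
    (hImapStar : IsIMAP μ X hX Gstar) (hAdjFaith : AdjFaithful μ X hX Gstar)
    (G : MixedGraph V) (hG : G.IsDMAG) (hImap : IsIMAP μ X hX G)
    (hmin : ∀ H : MixedGraph V, H.IsDMAG → IsIMAP μ X hX H → G.numEdges ≤ H.numEdges) :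
    G.SameSkel Gstar := by
  
  classical
  -- Step 1: every adjacency of Gstar is an adjacency of G.
  have hsub : ∀ i j : V, Gstar.adj i j → G.adj i j := by
    intro i j hadj
    by_contra hnadj
    have hne : i ≠ j := by
      rintro rfl
      rcases hadj with h | h | h
      · exact Gstar.dir_irrefl i h
      · exact Gstar.dir_irrefl i h
      · exact Gstar.bidir_irrefl i h
    obtain ⟨S, hiS, hjS, hsep⟩ := hG.2 i j hne hnadj
    have hCI : CI μ X hX {i} {j} S :=
      hImap {i} {j} S (Set.disjoint_singleton.mpr hne)
        (Set.disjoint_singleton_left.mpr hiS) (Set.disjoint_singleton_left.mpr hjS) hsep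
    have hCI' : CI μ X hX {j} {i} S := ProbabilityTheory.Kernel.IndepFun.symm hCI
    rcases hAdjFaith i j hadj S hiS hjS with h | h
    · exact h hCI
    · exact h hCI'
  -- Step 2: edge sets.
  set E : MixedGraph V → Set (Sym2 V) :=
    fun H => {s | ∃ i j : V, s = s(i, j) ∧ H.adj i j} with hE
  have hcard : ∀ H : MixedGraph V, H.numEdges = (E H).ncard := by
    intro H
    rw [MixedGraph.numEdges, ← Nat.card_coe_set_eq]
    rfl
  have hEsub : E Gstar ⊆ E G := by
    rintro s ⟨i, j, rfl, hadj⟩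
    exact ⟨i, j, rfl, hsub i j hadj⟩
  have hle : (E G).ncard ≤ (E Gstar).ncard := by
    rw [← hcard, ← hcard]
    exact hmin Gstar hGstar hImapStar
  have hEeq : E Gstar = E G :=
    Set.eq_of_subset_of_ncard_le hEsub hle (Set.toFinite _)
  intro i j
  constructor
  · intro h
    have hs : s(i, j) ∈ E Gstar := hEeq ▸ (⟨i, j, rfl, h⟩ : s(i, j) ∈ E G)
    obtain ⟨a, b, hab, hadj⟩ := hs
    rcases Sym2.eq_iff.mp hab with ⟨rfl, rfl⟩ | ⟨rfl, rfl⟩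
    · exact hadj
    · exact Gstar.adj_symm hadj
  · exact hsub i j
end

section
/- Let V be a finite set, let (X_i : i ∈ V) be random variables with joint distribution P, and suppose P is restricted-faithful to a DMAG G* on V. If G is a DMAG that is Markov equivalent to G* (I(G) = I(G*)) and π = po(G), then G_π = G. -/
open MeasureTheory ProbabilityTheory

open MixedGraph

/-!
Markov equivalence preserves the adjacencies of maximal graphs (adjacent vertices are never
m-separated), so `G` inherits from `G*` both the IMAP property and adjacency-faithfulness.

The graph-theoretic core: in a maximal graph, non-adjacent `i, j` are m-separated by
`D = an({i, j}) \ {i, j}`. On a path m-connecting given `D`, a non-collider starts a directed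
path that runs along it to an endpoint or to a collider (an ancestor of `D`), so it lies in `D`
and blocks. Hence every inner vertex is a collider and an ancestor of `i` or `j`. Given any `S`,
reroute such a collider that is not an ancestor of `S` along its directed path to the endpoint
(which strictly lowers the number of these colliders), and finally cut out repeated vertices:
this yields a path m-connecting given `S`, contradicting maximality.

So for `π = po(G)` the test of `AG(π, P)` between `i` and `j`, given `D`, finds a dependence
exactly when `i, j` are adjacent in `G`, and the edge type is read off from `π`:
`AG(po(G), P) = G`. Applying this twice, and noting that a maximal graph is its own maximal
closure, gives `G_π = G`.
-/

namespace List

variable {α : Type*}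

def ForallTriples (P : α → α → α → Prop) (w : List α) : Prop :=
  ∀ m (h : m + 2 < w.length), P w[m] w[m + 1] w[m + 2]

lemma getElem_reverse_of_add_eq {w : List α} {t k : ℕ} (hk : k < w.length)
    (he : t + k = w.length - 1) (ht : t < w.reverse.length) : w.reverse[t] = w[k] := by
  rw [getElem_reverse]
  exact getElem_congr_idx (by simp only [length_reverse] at ht; omega)

lemma ForallTriples.reverse {P : α → α → α → Prop} (hP : ∀ a b c, P a b c → P c b a)
    {w : List α} (h : w.ForallTriples P) : w.reverse.ForallTriples P := by
  intro m hm
  simp only [length_reverse] at hm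
  rw [getElem_reverse_of_add_eq (k := w.length - 3 - m + 2) (by omega) (by omega),
    getElem_reverse_of_add_eq (k := w.length - 3 - m + 1) (by omega) (by omega),
    getElem_reverse_of_add_eq (k := w.length - 3 - m) (by omega) (by omega)]
  exact hP _ _ _ (h _ (by omega))

lemma getElem_take_append_of_le {w l : List α} {m t : ℕ} (hm : m < w.length) (ht : t ≤ m) :
    (w.take (m + 1) ++ l)[t]'(by simp; omega) = w[t] := by
  rw [getElem_append_left (by simp; omega), getElem_take]

lemma getElem_take_append_add {w l : List α} {m s : ℕ} (hm : m < w.length)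
    (hs : s < l.length + 1) :
    (w.take (m + 1) ++ l)[m + s]'(by simp; omega) = (w[m] :: l)[s] := by
  cases s with
  | zero => exact getElem_take_append_of_le hm le_rfl
  | succ s =>
    rw [getElem_append_right (by simp), getElem_cons_succ]
    exact getElem_congr_idx (by simp; omega)

end List

namespace MixedGraph

variable {V : Type*} {G H : MixedGraph V} {T S : Set V}

lemma not_adj_self (G : MixedGraph V) (i : V) : ¬ G.adj i i := by
  rintro (h | h | h)
  exacts [G.dir_irrefl i h, G.dir_irrefl i h, G.bidir_irrefl i h]

lemma ne_of_adj {i j : V} (h : G.adj i j) : i ≠ j := by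
  rintro rfl
  exact G.not_adj_self i h

lemma dir_of_adj_of_not_arrowAt {b c : V} (hadj : G.adj b c) (h : ¬ G.arrowAt c b) :
    G.dir b c := by
  rcases hadj with h' | h' | h'
  · exact h'
  · exact absurd (Or.inl h') h
  · exact absurd (Or.inr (G.bidir_symm _ _ h')) h

lemma not_arrowAt_of_dir {b c : V} (h : G.dir b c) : ¬ G.arrowAt c b := by
  rintro (h' | h')
  · exact G.not_dir_dir b c h h'
  · exact G.not_dir_bidir b c h (G.bidir_symm c b h')

lemma IsCollider.symm {a b c : V} (h : G.IsCollider a b c) : G.IsCollider c b a := ⟨h.2, h.1⟩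

lemma not_anc_of_dir (hG : G.Acyclic) {i j : V} (h : G.dir i j) : ¬ G.Anc j i :=
  fun hji => hG i (Relation.TransGen.head' h hji)

lemma not_anc_of_bidir (hG : G.IsAncestral) {i j : V} (h : G.bidir i j) : ¬ G.Anc i j := by
  rw [Anc, Relation.reflTransGen_iff_eq_or_transGen]
  rintro (rfl | hij)
  exacts [G.bidir_irrefl _ h, hG.2 i j h hij]

lemma anc_of_isChain_dir {a : V} {l : List V} (h : (a :: l).IsChain G.dir) :
    ∀ x ∈ a :: l, G.Anc a x := by
  induction l generalizing a with
  | nil =>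
    rintro x (_ | ⟨_, ⟨⟩⟩)
    exact Relation.ReflTransGen.refl
  | cons b l ih =>
    obtain ⟨hab, hbl⟩ := List.isChain_cons_cons.mp h
    rintro x (_ | ⟨_, hx⟩)
    · exact Relation.ReflTransGen.refl
    · exact Relation.ReflTransGen.head hab (ih hbl x hx)

/-- An m-connecting path given `C` is one all of whose triples are open for `T = S = C`. -/
def IsOpenTriple (G : MixedGraph V) (T S : Set V) (a b c : V) : Prop :=
  (G.IsCollider a b c → ∃ x ∈ T, G.Anc b x) ∧ (¬ G.IsCollider a b c → b ∉ S)

lemma IsOpenTriple.symm {a b c : V} (h : G.IsOpenTriple T S a b c) :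
    G.IsOpenTriple T S c b a :=
  ⟨fun hc => h.1 hc.symm, fun hc => h.2 fun hc' => hc hc'.symm⟩

structure IsWalk (G : MixedGraph V) (i j : V) (w : List V) : Prop where
  length_pos : 0 < w.length
  getElem_zero : w[0] = i
  getElem_last : w[w.length - 1] = j
  adj : ∀ m (h : m + 1 < w.length), G.adj w[m] w[m + 1]

lemma IsWalk.reverse {i j : V} {w : List V} (hw : G.IsWalk i j w) : G.IsWalk j i w.reverse where
  length_pos := by simpa using hw.length_pos
  getElem_zero := by
    rw [List.getElem_reverse_of_add_eq (k := w.length - 1) (by have := hw.length_pos; omega)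
      (by omega)]
    exact hw.getElem_last
  getElem_last := by
    rw [List.getElem_reverse_of_add_eq (k := 0) hw.length_pos (by simp)]
    exact hw.getElem_zero
  adj m hm := by
    simp only [List.length_reverse] at hm
    rw [List.getElem_reverse_of_add_eq (k := w.length - 2 - m + 1) (by omega) (by omega),
      List.getElem_reverse_of_add_eq (k := w.length - 2 - m) (by omega) (by omega)]
    exact G.adj_symm (hw.adj _ (by omega))

lemma _root_.MPath.isWalk {i j : V} (p : MPath G i j) : G.IsWalk i j p.verts where
  length_pos := List.length_pos_iff.mpr p.ne_nil
  getElem_zero := by rw [← List.head_eq_getElem p.ne_nil]; exact p.head_eq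
  getElem_last := by rw [← List.getLast_eq_getElem p.ne_nil]; exact p.last_eq
  adj := List.isChain_iff_getElem.mp p.chain

def IsWalk.toMPath {i j : V} {w : List V} (hw : G.IsWalk i j w) (hnd : w.Nodup) :
    MPath G i j where
  verts := w
  ne_nil := List.ne_nil_of_length_pos hw.length_pos
  head_eq := by rw [List.head_eq_getElem]; exact hw.getElem_zero
  last_eq := by rw [List.getLast_eq_getElem]; exact hw.getElem_last
  nodup := hnd
  chain := List.isChain_iff_getElem.mpr hw.adj

lemma IsWalk.take_append {i j : V} {w l : List V} (hw : G.IsWalk i j w) {m : ℕ}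
    (hm : m < w.length) (hl : (w[m] :: l).IsChain G.adj)
    (hlast : (w[m] :: l).getLast (List.cons_ne_nil _ _) = j) :
    G.IsWalk i j (w.take (m + 1) ++ l) where
  length_pos := by simp; omega
  getElem_zero := by
    rw [List.getElem_take_append_of_le hm (Nat.zero_le _)]
    exact hw.getElem_zero
  getElem_last := by
    rw [← hlast, List.getLast_eq_getElem, ← List.getElem_take_append_add hm (by simp)]
    exact getElem_congr_idx (by simp; omega)
  adj t ht := by
    simp only [List.length_append, List.length_take] at ht
    by_cases htm : t + 1 ≤ m
    · rw [List.getElem_take_append_of_le hm (by omega), List.getElem_take_append_of_le hm htm]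
      exact hw.adj t (by omega)
    · rw [getElem_congr_idx (show t = m + (t - m) by omega),
        List.getElem_take_append_add hm (by omega),
        getElem_congr_idx (show t + 1 = m + (t - m + 1) by omega),
        List.getElem_take_append_add hm (by omega)]
      exact List.isChain_iff_getElem.mp hl _ (by simp; omega)

lemma forall_dir_or_anc_of_dir {w : List V}
    (hadj : ∀ m (h : m + 1 < w.length), G.adj w[m] w[m + 1])
    (hw : w.ForallTriples (G.IsOpenTriple T S)) {t : ℕ} (ht : t + 1 < w.length)
    (hd : G.dir w[t] w[t + 1]) :
    (∃ x ∈ T, G.Anc w[t] x) ∨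
      ∀ s (hs : s + 1 < w.length), t ≤ s → G.dir w[s] w[s + 1] := by
  obtain ⟨k, hk⟩ : ∃ k, w.length = t + 2 + k := ⟨w.length - (t + 2), by omega⟩
  induction k generalizing t with
  | zero =>
    refine Or.inr fun s hs hts => ?_
    obtain rfl : s = t := by omega
    exact hd
  | succ k ih =>
    have h2 : t + 2 < w.length := by omega
    by_cases hcol : G.IsCollider w[t] w[t + 1] w[t + 2]
    · obtain ⟨x, hx, hanc⟩ := (hw t h2).1 hcol
      exact Or.inl ⟨x, hx, Relation.ReflTransGen.head hd hanc⟩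
    have hd' : G.dir w[t + 1] w[t + 2] :=
      dir_of_adj_of_not_arrowAt (hadj (t + 1) h2) fun h => hcol ⟨Or.inl hd, h⟩
    rcases ih h2 hd' (by omega) with ⟨x, hx, hanc⟩ | hall
    · exact Or.inl ⟨x, hx, Relation.ReflTransGen.head hd hanc⟩
    · refine Or.inr fun s hs hts => ?_
      rcases hts.eq_or_lt with rfl | hlt
      exacts [hd, hall s hs hlt]

lemma anc_of_forall_dir {w : List V} {t : ℕ}
    (hall : ∀ s (hs : s + 1 < w.length), t ≤ s → G.dir w[s] w[s + 1]) (ht : t < w.length) :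
    ∀ s (hs : s < w.length), t ≤ s → G.Anc w[t] w[s] := by
  intro s hs hts
  induction s, hts using Nat.le_induction with
  | base => exact Relation.ReflTransGen.refl
  | succ s hts ih => exact (ih (by omega)).tail (hall s hs hts)

lemma anc_of_dir_of_forallTriples {w : List V}
    (hadj : ∀ m (h : m + 1 < w.length), G.adj w[m] w[m + 1])
    (hw : w.ForallTriples (G.IsOpenTriple T S)) {t : ℕ} (ht : t + 1 < w.length)
    (hd : G.dir w[t] w[t + 1]) :
    (∃ x ∈ T, G.Anc w[t] x) ∨ G.Anc w[t] w[w.length - 1] :=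
  (forall_dir_or_anc_of_dir hadj hw ht hd).imp_right fun hall =>
    anc_of_forall_dir hall (by omega) _ (by omega) (by omega)

lemma anc_of_not_isCollider {i j : V} {w : List V} (hw : G.IsWalk i j w)
    (hT : w.ForallTriples (G.IsOpenTriple T S)) {m : ℕ} (hm : m + 2 < w.length)
    (hncol : ¬ G.IsCollider w[m] w[m + 1] w[m + 2]) :
    (∃ x ∈ T, G.Anc w[m + 1] x) ∨ G.Anc w[m + 1] i ∨ G.Anc w[m + 1] j := by
  by_cases hR : G.arrowAt w[m + 2] w[m + 1]
  · have hd : G.dir w[m + 1] w[m] :=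
      dir_of_adj_of_not_arrowAt (G.adj_symm (hw.adj m (by omega))) fun hL => hncol ⟨hL, hR⟩
    have hlen : w.reverse.length = w.length := List.length_reverse
    have e1 : w.reverse[w.length - 2 - m]'(by omega) = w[m + 1] :=
      List.getElem_reverse_of_add_eq _ (by omega) _
    have e2 : w.reverse[w.length - 2 - m + 1]'(by omega) = w[m] :=
      List.getElem_reverse_of_add_eq _ (by omega) _
    have := anc_of_dir_of_forallTriples hw.reverse.adj
      (hT.reverse fun _ _ _ h => h.symm) (t := w.length - 2 - m) (by omega)
      (by rw [e1, e2]; exact hd)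
    rw [e1, hw.reverse.getElem_last] at this
    exact this.imp_right Or.inl
  · have hd : G.dir w[m + 1] w[m + 2] := dir_of_adj_of_not_arrowAt (hw.adj (m + 1) hm) hR
    have := anc_of_dir_of_forallTriples hw.adj hT hm hd
    rw [hw.getElem_last] at this
    exact this.imp_right Or.inr

/-- The triple created at the junction when the closed sub-walk between two visits
`w[t + 1] = w[c + 1]` of the same vertex is cut out is again open. -/
lemma isOpenTriple_of_getElem_eq {w : List V}
    (hadj : ∀ m (h : m + 1 < w.length), G.adj w[m] w[m + 1])
    (hT : w.ForallTriples (G.IsOpenTriple T S)) {t c : ℕ} (htc : t < c)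
    (hc : c + 2 < w.length) (he : w[t + 1] = w[c + 1]) :
    G.IsOpenTriple T S w[t] w[t + 1] w[c + 2] := by
  constructor
  · intro hcol
    by_cases h1 : G.IsCollider w[t] w[t + 1] w[t + 2]
    · exact (hT t (by omega)).1 h1
    have hd1 : G.dir w[t + 1] w[t + 2] :=
      dir_of_adj_of_not_arrowAt (hadj (t + 1) (by omega)) fun h => h1 ⟨hcol.1, h⟩
    by_cases h2 : G.IsCollider w[c] w[c + 1] w[c + 2]
    · rw [he]
      exact (hT c hc).1 h2
    have hd2 : G.dir w[c + 1] w[c] :=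
      dir_of_adj_of_not_arrowAt (G.adj_symm (hadj c (by omega))) fun h => h2 ⟨h, he ▸ hcol.2⟩
    -- following the edge out of `w[t + 1]` forward would force `w[c] → w[c + 1]`
    refine (forall_dir_or_anc_of_dir hadj hT (t := t + 1) (by omega) hd1).resolve_right ?_
    exact fun hall => G.not_dir_dir _ _ hd2 (hall c (by omega) (by omega))
  · intro hncol
    by_cases hL : G.arrowAt w[t] w[t + 1]
    · rw [he]
      exact (hT c hc).2 fun h => hncol ⟨hL, he ▸ h.2⟩
    · exact (hT t (by omega)).2 fun h => hL h.1

lemma exists_shorter_of_getElem_eq {i j : V} {w : List V} (hw : G.IsWalk i j w)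
    (hT : w.ForallTriples (G.IsOpenTriple T S)) {a b : ℕ} (hab : a < b) (hb : b < w.length)
    (he : w[a] = w[b]) :
    ∃ u : List V, u.length < w.length ∧ G.IsWalk i j u ∧
      u.ForallTriples (G.IsOpenTriple T S) := by
  have hab2 : a + 1 < b := by
    by_contra h
    obtain rfl : b = a + 1 := by omega
    exact G.not_adj_self _ (he ▸ hw.adj a hb)
  have hdrop : w[a] :: w.drop (b + 1) = w.drop b := by rw [he, List.drop_eq_getElem_cons hb]
  set u := w.take (a + 1) ++ w.drop (b + 1)
  have hu : G.IsWalk i j u := hw.take_append (by omega)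
    (hdrop ▸ (List.isChain_iff_getElem.mpr hw.adj).drop b)
    (by
      rw [← hw.getElem_last,
        ← List.getLast_eq_getElem (List.ne_nil_of_length_pos hw.length_pos)]
      simp only [hdrop, List.getLast_drop])
  have hlen : u.length = w.length - (b - a) := by simp [u]; omega
  have hu1 : ∀ t (ht : t ≤ a), u[t]'(by omega) = w[t] :=
    fun t ht => List.getElem_take_append_of_le (by omega) ht
  have hu2 : ∀ t (ht : a ≤ t) (h : t + (b - a) < w.length),
      u[t]'(by omega) = w[t + (b - a)] := by
    intro t ht h
    rw [getElem_congr_idx (show t = a + (t - a) by omega),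
      List.getElem_take_append_add (by omega) (by simp; omega)]
    simp only [hdrop, List.getElem_drop]
    exact getElem_congr_idx (by omega)
  refine ⟨u, by omega, hu, fun m hm => ?_⟩
  by_cases hma : m + 2 ≤ a
  · rw [hu1 m (by omega), hu1 (m + 1) (by omega), hu1 (m + 2) hma]
    exact hT m (by omega)
  by_cases ham : a ≤ m
  · rw [hu2 m ham (by omega), hu2 (m + 1) (by omega) (by omega),
      hu2 (m + 2) (by omega) (by omega),
      getElem_congr_idx (show m + 1 + (b - a) = m + (b - a) + 1 by omega),
      getElem_congr_idx (show m + 2 + (b - a) = m + (b - a) + 2 by omega)]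
    exact hT _ (by omega)
  obtain ⟨c, rfl⟩ : ∃ c, b = c + 1 := ⟨b - 1, by omega⟩
  rw [hu1 m (by omega), hu1 (m + 1) (by omega), hu2 (m + 2) (by omega) (by omega),
    getElem_congr_idx (show m + 2 + (c + 1 - a) = c + 2 by omega)]
  exact isOpenTriple_of_getElem_eq hw.adj hT (by omega) (by omega)
    (by rw [← he]; exact getElem_congr_idx (by omega))

lemma IsWalk.exists_mPath {i j : V} {w : List V} (hw : G.IsWalk i j w)
    (hT : w.ForallTriples (G.IsOpenTriple T S)) :
    ∃ p : MPath G i j, p.verts.ForallTriples (G.IsOpenTriple T S) := by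
  induction hn : w.length using Nat.strong_induction_on generalizing w with
  | _ n ih =>
  by_cases hnd : w.Nodup
  · exact ⟨hw.toMPath hnd, hT⟩
  simp only [List.Nodup, List.pairwise_iff_getElem] at hnd
  push Not at hnd
  obtain ⟨a, b, _, hb, hab, he⟩ := hnd
  obtain ⟨u, hlen, hu, huT⟩ := exists_shorter_of_getElem_eq hw hT hab hb he
  exact ih _ (hn ▸ hlen) hu huT rfl

def badColliders (G : MixedGraph V) (S : Set V) (w : List V) : Set ℕ :=
  {m | ∃ h : m + 2 < w.length,
    G.IsCollider w[m] w[m + 1] w[m + 2] ∧ ¬ ∃ x ∈ S, G.Anc w[m + 1] x}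

lemma badColliders_finite (S : Set V) (w : List V) : (G.badColliders S w).Finite :=
  (Set.finite_Iio w.length).subset fun m ⟨h, _⟩ => Set.mem_Iio.mpr (by omega)

lemma mem_badColliders_reverse {w : List V} {m : ℕ}
    (h : m ∈ G.badColliders S w) : w.length - 3 - m ∈ G.badColliders S w.reverse := by
  obtain ⟨hm, hcol, hnanc⟩ := h
  refine ⟨by simp; omega, ?_, ?_⟩
  · rw [List.getElem_reverse_of_add_eq (k := m + 2) (by omega) (by omega),
      List.getElem_reverse_of_add_eq (k := m + 1) (by omega) (by omega),
      List.getElem_reverse_of_add_eq (k := m) (by omega) (by omega)]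
    exact hcol.symm
  · rwa [List.getElem_reverse_of_add_eq (k := m + 1) (by omega) (by omega)]

lemma badColliders_reverse_subset (S : Set V) (w : List V) :
    G.badColliders S w.reverse ⊆ (fun k => w.length - 3 - k) '' G.badColliders S w := by
  intro m hm
  have h := mem_badColliders_reverse hm
  rw [List.reverse_reverse, List.length_reverse] at h
  obtain ⟨hm2, _⟩ := hm
  simp only [List.length_reverse] at hm2
  exact ⟨_, h, by dsimp only; omega⟩

lemma ncard_badColliders_reverse_le (S : Set V) (w : List V) :
    (G.badColliders S w.reverse).ncard ≤ (G.badColliders S w).ncard :=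
  (Set.ncard_le_ncard (badColliders_reverse_subset S w) ((badColliders_finite S w).image _)).trans
    (Set.ncard_image_le (badColliders_finite S w))

lemma ncard_badColliders_reverse (S : Set V) (w : List V) :
    (G.badColliders S w.reverse).ncard = (G.badColliders S w).ncard := by
  refine (ncard_badColliders_reverse_le S w).antisymm ?_
  simpa using ncard_badColliders_reverse_le (G := G) S w.reverse

/-- Follow `w` up to the collider `w[m + 1]`, then a directed path from it to `j`; that path
avoids `S` because `w[m + 1]` is not an ancestor of `S`. -/
lemma exists_reroute_to_last {i j : V} {w : List V} (hw : G.IsWalk i j w)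
    (hT : w.ForallTriples (G.IsOpenTriple T S)) {m : ℕ} (hm : m + 2 < w.length)
    (hbad : m ∈ G.badColliders S w) (hmj : G.Anc w[m + 1] j) :
    ∃ u, G.IsWalk i j u ∧ u.ForallTriples (G.IsOpenTriple T S) ∧
      (G.badColliders S u).ncard < (G.badColliders S w).ncard := by
  obtain ⟨l, hl, hlast⟩ := List.exists_isChain_cons_of_relationReflTransGen hmj
  have hlS : ∀ x ∈ w[m + 1] :: l, x ∉ S :=
    fun x hx hxS => hbad.2.2 ⟨x, hxS, anc_of_isChain_dir hl x hx⟩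
  set u := w.take (m + 1 + 1) ++ l
  have hu : G.IsWalk i j u := hw.take_append (by omega) (hl.imp fun _ _ h => Or.inl h) hlast
  have hlen : u.length = m + 2 + l.length := by simp [u]; omega
  have hprefix : ∀ t (ht : t ≤ m + 1), u[t]'(by omega) = w[t] :=
    fun t ht => List.getElem_take_append_of_le (by omega) ht
  have htail : ∀ s (hs : s < l.length + 1), u[m + 1 + s]'(by omega) = (w[m + 1] :: l)[s] :=
    fun s hs => List.getElem_take_append_add (by omega) hs
  have hdir : ∀ t (ht : t + 1 < u.length), m + 1 ≤ t → G.dir u[t] u[t + 1] := by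
    intro t ht hmt
    rw [getElem_congr_idx (show t = m + 1 + (t - m - 1) by omega), htail _ (by omega),
      getElem_congr_idx (show t + 1 = m + 1 + (t - m - 1 + 1) by omega), htail _ (by omega)]
    exact List.isChain_iff_getElem.mp hl _ (by simp; omega)
  have hnS : ∀ t (ht : t < u.length), m + 1 ≤ t → u[t] ∉ S := by
    intro t ht hmt
    rw [getElem_congr_idx (show t = m + 1 + (t - m - 1) by omega), htail _ (by omega)]
    exact hlS _ (List.getElem_mem _)
  have hncol : ∀ t (ht : t + 2 < u.length), m ≤ t → ¬ G.IsCollider u[t] u[t + 1] u[t + 2] :=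
    fun t ht hmt hc => not_arrowAt_of_dir (hdir (t + 1) ht (by omega)) hc.2
  have hsub : G.badColliders S u ⊆ G.badColliders S w \ {m} := by
    rintro k ⟨hk, hcol, hnanc⟩
    by_cases hkm : m ≤ k
    · exact absurd hcol (hncol k hk hkm)
    rw [hprefix k (by omega), hprefix (k + 1) (by omega), hprefix (k + 2) (by omega)] at hcol
    rw [hprefix (k + 1) (by omega)] at hnanc
    exact ⟨⟨by omega, hcol, hnanc⟩, by simp only [Set.mem_singleton_iff]; omega⟩
  refine ⟨u, hu, fun t ht => ?_, ?_⟩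
  · by_cases htm : t + 2 ≤ m + 1
    · rw [hprefix t (by omega), hprefix (t + 1) (by omega), hprefix (t + 2) htm]
      exact hT t (by omega)
    · exact ⟨fun hc => absurd hc (hncol t ht (by omega)), fun _ => hnS _ _ (by omega)⟩
  · calc (G.badColliders S u).ncard
        ≤ (G.badColliders S w \ {m}).ncard :=
          Set.ncard_le_ncard hsub (badColliders_finite S w).sdiff
      _ < (G.badColliders S w).ncard :=
          Set.ncard_sdiff_singleton_lt_of_mem hbad (badColliders_finite S w)

lemma exists_reroute {i j : V} {w : List V} (hw : G.IsWalk i j w)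
    (hT : w.ForallTriples (G.IsOpenTriple T S)) {m : ℕ} (hm : m + 2 < w.length)
    (hbad : m ∈ G.badColliders S w) (hend : G.Anc w[m + 1] i ∨ G.Anc w[m + 1] j) :
    ∃ u, G.IsWalk i j u ∧ u.ForallTriples (G.IsOpenTriple T S) ∧
      (G.badColliders S u).ncard < (G.badColliders S w).ncard := by
  rcases hend with hi | hj
  · have e : w.reverse[w.length - 3 - m + 1]'(by simp; omega) = w[m + 1] :=
      List.getElem_reverse_of_add_eq _ (by omega) _
    obtain ⟨u, hu, huT, hlt⟩ := exists_reroute_to_last hw.reverse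
      (hT.reverse fun _ _ _ h => h.symm) (by simp; omega) (mem_badColliders_reverse hbad)
      (by rw [e]; exact hi)
    refine ⟨u.reverse, hu.reverse, huT.reverse fun _ _ _ h => h.symm, ?_⟩
    rwa [ncard_badColliders_reverse, ← ncard_badColliders_reverse S w]
  · exact exists_reroute_to_last hw hT hm hbad hj

theorem IsWalk.exists_mConnecting {i j : V} {w : List V} (hw : G.IsWalk i j w)
    (hT : w.ForallTriples (G.IsOpenTriple (insert i (insert j S)) S)) :
    ∃ p : MPath G i j, G.MConnecting S p := by
  induction hn : (G.badColliders S w).ncard using Nat.strong_induction_on generalizing w with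
  | _ n ih =>
  by_cases h0 : n = 0
  · have hempty := (Set.ncard_eq_zero (badColliders_finite S w)).mp (hn.trans h0)
    refine hw.exists_mPath fun m hm => ⟨fun hcol => ?_, (hT m hm).2⟩
    by_contra hnanc
    exact hempty.subset ⟨hm, hcol, hnanc⟩
  obtain ⟨m, hm, hcol, hnanc⟩ := Set.nonempty_of_ncard_ne_zero (hn ▸ h0)
  have hend : G.Anc w[m + 1] i ∨ G.Anc w[m + 1] j := by
    obtain ⟨x, hx, hanc⟩ := (hT m hm).1 hcol
    rcases hx with rfl | rfl | hxS
    exacts [Or.inl hanc, Or.inr hanc, absurd ⟨x, hxS, hanc⟩ hnanc]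
  obtain ⟨u, hu, huT, hlt⟩ := exists_reroute hw hT hm ⟨hm, hcol, hnanc⟩ hend
  exact ih _ (hn ▸ hlt) hu huT rfl

theorem msep_of_not_adj (hG : G.IsMaximal) {i j : V} (hne : i ≠ j) (hnadj : ¬ G.adj i j) :
    G.MSep {i} {j} ({x | G.Anc x i ∨ G.Anc x j} \ {i, j}) := by
  obtain ⟨S, -, -, hsep⟩ := hG i j hne hnadj
  rintro a rfl b rfl p hp
  have hw := p.isWalk
  refine (hw.exists_mConnecting (S := S) fun m hm => ?_).elim fun q hq => hsep a rfl b rfl q hq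
  by_cases hcol : G.IsCollider p.verts[m] p.verts[m + 1] p.verts[m + 2]
  · obtain ⟨x, ⟨hx | hx, -⟩, hanc⟩ := (hp m hm).1 hcol
    exacts [⟨fun _ => ⟨a, by simp, hanc.trans hx⟩, fun h => absurd hcol h⟩,
      ⟨fun _ => ⟨b, by simp, hanc.trans hx⟩, fun h => absurd hcol h⟩]
  -- a non-collider would be an ancestor of `a` or `b` other than `a` and `b`, hence blocked
  refine absurd ⟨?_, ?_⟩ ((hp m hm).2 hcol)
  · rcases anc_of_not_isCollider hw hp hm hcol with ⟨x, ⟨hx | hx, -⟩, hanc⟩ | h | h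
    exacts [Or.inl (hanc.trans hx), Or.inr (hanc.trans hx), Or.inl h, Or.inr h]
  · rintro (h | h)
    · have := p.nodup.getElem_inj_iff.mp (h.trans hw.getElem_zero.symm)
      omega
    · have := p.nodup.getElem_inj_iff.mp (h.trans hw.getElem_last.symm)
      omega

lemma not_msep_of_adj {i j : V} (hadj : G.adj i j) (S : Set V) : ¬ G.MSep {i} {j} S := by
  intro h
  refine h i rfl j rfl ⟨[i, j], by simp, rfl, rfl, by simp [ne_of_adj hadj],
    List.isChain_pair.mpr hadj⟩ fun m hm => ?_
  simp at hm

lemma ext_of_dir_bidir (h₁ : G.dir = H.dir) (h₂ : G.bidir = H.bidir) : G = H := by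
  cases G
  cases H
  cases h₁
  cases h₂
  rfl

lemma MarkovEquiv.adj (hH : H.IsMaximal) (he : G.MarkovEquiv H) {i j : V} (hadj : G.adj i j) :
    H.adj i j := by
  by_contra hn
  obtain ⟨S, hiS, hjS, hsep⟩ := hH i j (ne_of_adj hadj) hn
  exact not_msep_of_adj hadj S ((he {i} {j} S (Set.disjoint_singleton.mpr (ne_of_adj hadj))
    (Set.disjoint_singleton_left.mpr hiS) (Set.disjoint_singleton_left.mpr hjS)).mpr hsep)

end MixedGraph

lemma maximalClosure_eq_self {V : Type*} {G : MixedGraph V} (hG : G.IsMaximal) :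
    maximalClosure G = G := by
  have hins : ∀ i j, ¬ G.adj i j → i ≠ j → ¬ G.Insep i j := fun i j hnadj hne hins =>
    have ⟨S, hiS, hjS, hsep⟩ := hG i j hne hnadj
    (hins S hiS hjS).1 hsep
  refine MixedGraph.ext_of_dir_bidir ?_ ?_ <;> funext i j <;> apply propext <;>
    exact or_iff_left fun ⟨hnadj, hne, h, _⟩ => hins i j hnadj hne h

section Probability

variable {V : Type*} {Ω : Type*} [MeasurableSpace Ω] [StandardBorelSpace Ω]
  {μ : Measure Ω} [IsFiniteMeasure μ] {X : V → Ω → ℝ} {hX : ∀ i, Measurable (X i)}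
  {G H : MixedGraph V}

lemma IsIMAP.of_markovEquiv (hH : IsIMAP μ X hX H) (he : G.MarkovEquiv H) : IsIMAP μ X hX G :=
  fun A B C hAB hAC hBC hsep => hH A B C hAB hAC hBC ((he A B C hAB hAC hBC).mp hsep)

lemma AdjFaithful.mono (hH : AdjFaithful μ X hX H) (hadj : ∀ i j, G.adj i j → H.adj i j) :
    AdjFaithful μ X hX G :=
  fun i j h => hH i j (hadj i j h)

lemma not_condDep_of_not_adj (hG : G.IsMaximal) (himap : IsIMAP μ X hX G) {i j : V}
    (hne : i ≠ j) (hnadj : ¬ G.adj i j) :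
    ¬ CondDep μ X hX i j ({x | G.Anc x i ∨ G.Anc x j} \ {i, j}) := by
  have hsep := msep_of_not_adj hG hne hnadj
  have hsep' := msep_of_not_adj hG hne.symm fun h => hnadj (G.adj_symm h)
  rw [Set.pair_comm j i] at hsep'
  simp only [or_comm (a := G.Anc _ j)] at hsep'
  have hiD : i ∉ {x | G.Anc x i ∨ G.Anc x j} \ {i, j} := fun h => h.2 (by simp)
  have hjD : j ∉ {x | G.Anc x i ∨ G.Anc x j} \ {i, j} := fun h => h.2 (by simp)
  rintro (h | h)
  · exact h (himap _ _ _ (Set.disjoint_singleton.mpr hne) (Set.disjoint_singleton_left.mpr hiD)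
      (Set.disjoint_singleton_left.mpr hjD) hsep)
  · exact h (himap _ _ _ (Set.disjoint_singleton.mpr hne.symm)
      (Set.disjoint_singleton_left.mpr hjD) (Set.disjoint_singleton_left.mpr hiD) hsep')

lemma AGdist_po_eq (hG : G.IsDMAG) (himap : IsIMAP μ X hX G) (hadj : AdjFaithful μ X hX G) :
    AGdist μ X hX (po G hG.1.1) = G := by
  have hdep : ∀ i j, G.adj i j → CondDep μ X hX i j ({x | G.Anc x i ∨ G.Anc x j} \ {i, j}) :=
    fun i j h => hadj i j h _ (fun hx => hx.2 (by simp)) (fun hx => hx.2 (by simp))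
  have hadj_of_dep : ∀ i j, i ≠ j →
      CondDep μ X hX i j ({x | G.Anc x i ∨ G.Anc x j} \ {i, j}) → G.adj i j :=
    fun i j hne h => by_contra fun hn => not_condDep_of_not_adj hG.2 himap hne hn h
  refine MixedGraph.ext_of_dir_bidir (funext₂ fun i j => propext ⟨?_, ?_⟩)
    (funext₂ fun i j => propext ⟨?_, ?_⟩)
  · rintro ⟨hle, hne, h⟩
    rcases hadj_of_dep i j hne h with h | h | h
    · exact h
    · exact absurd hle (not_anc_of_dir hG.1.1 h)
    · exact absurd hle (not_anc_of_bidir hG.1 h)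
  · exact fun h => ⟨Relation.ReflTransGen.single h, ne_of_adj (Or.inl h), hdep i j (Or.inl h)⟩
  · rintro ⟨hij, hji, h⟩
    rcases hadj_of_dep i j (fun he => hij (he ▸ Relation.ReflTransGen.refl)) h with h | h | h
    · exact absurd (Relation.ReflTransGen.single h) hij
    · exact absurd (Relation.ReflTransGen.single h) hji
    · exact h
  · exact fun h => ⟨not_anc_of_bidir hG.1 h, not_anc_of_bidir hG.1 (G.bidir_symm _ _ h),
      hdep i j (Or.inr (Or.inr h))⟩

end Probability

theorem gpi_eq_of_markovEquiv_general {V : Type*} {Ω : Type*} [MeasurableSpace Ω]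
    [StandardBorelSpace Ω] (μ : MeasureTheory.Measure Ω)
    [MeasureTheory.IsProbabilityMeasure μ] (X : V → Ω → ℝ) (hX : ∀ i, Measurable (X i))
    (Gstar : MixedGraph V) (hGstar : Gstar.IsDMAG)
    (hfaith : RestrictedFaithful μ X hX Gstar)
    (G : MixedGraph V) (hG : G.IsDMAG) (hequiv : G.MarkovEquiv Gstar) :
    Gpi μ X hX (po G hG.1.1) = G := by
  have hAG : AGdist μ X hX (po G hG.1.1) = G :=
    AGdist_po_eq hG (hfaith.1.of_markovEquiv hequiv)
      (hfaith.2.1.mono fun _ _ => hequiv.adj hGstar.2)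
  simp only [Gpi, hAG, maximalClosure_eq_self hG.2]

/-- Proposition 2: if `G` is Markov equivalent to the true DMAG `G*`
and `π = po(G)`, then `G_π = G`. -/
theorem gpi_eq_of_markovEquiv {V : Type*} [Fintype V] {Ω : Type*} [MeasurableSpace Ω]
    [StandardBorelSpace Ω] [Nonempty Ω] (μ : MeasureTheory.Measure Ω)
    [MeasureTheory.IsProbabilityMeasure μ] (X : V → Ω → ℝ) (hX : ∀ i, Measurable (X i))
    (Gstar : MixedGraph V) (hGstar : Gstar.IsDMAG)
    (hfaith : RestrictedFaithful μ X hX Gstar)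
    (G : MixedGraph V) (hG : G.IsDMAG) (hequiv : G.MarkovEquiv Gstar) :
    Gpi μ X hX (po G hG.1.1) = G :=
  gpi_eq_of_markovEquiv_general μ X hX Gstar hGstar hfaith G hG hequiv
end

section
/- Let V be a finite set. The map G ↦ po(G), sending a directed maximal ancestral graph G to the poset (V, ≤_G) where i ≤_G j iff i is an ancestor of j in G, restricts to a bijection from the set of complete DMAGs on V (DMAGs whose skeleton is the complete graph on V) onto the set of all posets on the ground set V. -/
open MeasureTheory ProbabilityTheory

open MixedGraph

namespace MixedGraph

lemma ext' {V : Type*} {G H : MixedGraph V} (hd : G.dir = H.dir)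
    (hb : G.bidir = H.bidir) : G = H := by
  cases G; cases H; cases hd; cases hb; rfl

lemma strAnc_of_anc_ne {V : Type*} {G : MixedGraph V} {i j : V}
    (h : G.Anc i j) (hne : i ≠ j) : G.StrAnc i j := by
  rcases h.cases_head with h | ⟨c, hic, hcj⟩
  · exact absurd h hne
  · exact Relation.TransGen.head' hic hcj

lemma dir_iff_of_complete {V : Type*} {G : MixedGraph V} (hanc : G.IsAncestral)
    (hcomp : ∀ i j : V, i ≠ j → G.adj i j) (i j : V) :
    G.dir i j ↔ i ≠ j ∧ G.Anc i j := by
  constructor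
  · intro h
    exact ⟨fun e => G.dir_irrefl i (e ▸ h), Relation.ReflTransGen.single h⟩
  · rintro ⟨hne, ha⟩
    have hst : G.StrAnc i j := strAnc_of_anc_ne ha hne
    rcases hcomp i j hne with h | h | h
    · exact h
    · exact absurd (hst.tail h) (hanc.1 i)
    · exact absurd hst (hanc.2 i j h)

lemma bidir_iff_of_complete {V : Type*} {G : MixedGraph V} (hanc : G.IsAncestral)
    (hcomp : ∀ i j : V, i ≠ j → G.adj i j) (i j : V) :
    G.bidir i j ↔ i ≠ j ∧ ¬ G.Anc i j ∧ ¬ G.Anc j i := by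
  constructor
  · intro h
    refine ⟨fun e => G.bidir_irrefl i (e ▸ h), fun ha => ?_, fun ha => ?_⟩
    · exact hanc.2 i j h (strAnc_of_anc_ne ha (fun e => G.bidir_irrefl i (e ▸ h)))
    · exact hanc.2 j i (G.bidir_symm i j h)
        (strAnc_of_anc_ne ha (fun e => G.bidir_irrefl j (e ▸ G.bidir_symm i j h)))
  · rintro ⟨hne, h1, h2⟩
    rcases hcomp i j hne with h | h | h
    · exact absurd (Relation.ReflTransGen.single h) h1
    · exact absurd (Relation.ReflTransGen.single h) h2
    · exact h

end MixedGraph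

/-- The complete DMAG associated to a poset. -/
def posetGraph {V : Type*} (π : FinPoset V) : MixedGraph V where
  dir i j := i ≠ j ∧ π.le i j
  bidir i j := i ≠ j ∧ ¬ π.le i j ∧ ¬ π.le j i
  bidir_symm i j h := ⟨h.1.symm, h.2.2, h.2.1⟩
  dir_irrefl i h := h.1 rfl
  bidir_irrefl i h := h.1 rfl
  not_dir_dir i j h h' := h.1 (π.le_antisymm i j h.2 h'.2)
  not_dir_bidir i j h h' := h'.2.1 h.2

lemma posetGraph_strAnc {V : Type*} (π : FinPoset V) {a b : V}
    (h : (posetGraph π).StrAnc a b) : π.le a b ∧ a ≠ b := by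
  induction h with
  | single h => exact ⟨h.2, h.1⟩
  | tail _ h2 ih =>
    refine ⟨π.le_trans _ _ _ ih.1 h2.2, fun hab => ?_⟩
    subst hab
    exact h2.1 (π.le_antisymm _ _ h2.2 ih.1)

lemma posetGraph_complete {V : Type*} (π : FinPoset V) :
    IsCompleteDMAG (posetGraph π) := by
  have hadj : ∀ i j : V, i ≠ j → (posetGraph π).adj i j := by
    intro i j hne
    by_cases h1 : π.le i j
    · exact Or.inl ⟨hne, h1⟩
    by_cases h2 : π.le j i
    · exact Or.inr (Or.inl ⟨hne.symm, h2⟩)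
    · exact Or.inr (Or.inr ⟨hne, h1, h2⟩)
  exact ⟨⟨⟨fun i hi => (posetGraph_strAnc π hi).2 rfl,
    fun i j hb hs => hb.2.1 (posetGraph_strAnc π hs).1⟩,
    fun i j hne hnadj => absurd (hadj i j hne) hnadj⟩, hadj⟩

lemma posetGraph_anc {V : Type*} (π : FinPoset V) (i j : V) :
    (posetGraph π).Anc i j ↔ π.le i j := by
  constructor
  · intro h
    induction h with
    | refl => exact π.le_refl i
    | tail _ h2 ih => exact π.le_trans _ _ _ ih h2.2
  · intro h
    by_cases hne : i = j
    · subst hne; exact Relation.ReflTransGen.refl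
    · exact Relation.ReflTransGen.single ⟨hne, h⟩

lemma FinPoset.ext' {V : Type*} {π ρ : FinPoset V} (h : π.le = ρ.le) : π = ρ := by
  cases π; cases ρ; cases h; rfl

/-- `G ↦ po(G)` is a bijection from the set of complete DMAGs on `V`
onto the set of all posets on the ground set `V`. -/
theorem complete_dmag_poset_bijection (V : Type*) [Fintype V] :
    Function.Bijective
      (fun G : {G : MixedGraph V // IsCompleteDMAG G} => po G.1 G.2.1.1.1) := by
  constructor
  · rintro ⟨G, hG⟩ ⟨H, hH⟩ h
    have hanc : G.Anc = H.Anc := congrArg FinPoset.le h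
    apply Subtype.ext
    apply MixedGraph.ext'
    · funext i j
      rw [eq_iff_iff, MixedGraph.dir_iff_of_complete hG.1.1 hG.2,
        MixedGraph.dir_iff_of_complete hH.1.1 hH.2, hanc]
    · funext i j
      rw [eq_iff_iff, MixedGraph.bidir_iff_of_complete hG.1.1 hG.2,
        MixedGraph.bidir_iff_of_complete hH.1.1 hH.2, hanc]
  · intro π
    refine ⟨⟨posetGraph π, posetGraph_complete π⟩, ?_⟩
    apply FinPoset.ext'
    funext i j
    exact propext (posetGraph_anc π i j)
end

section
/- Let V = {1,2,3,4,5} and let H be the mixed graph on V with directed edges 5→4, 1→2, 3→4 and bidirected edges 1↔5, 2↔5, 3↔5, 1↔3, 2↔3, 1↔4. Then H is a directed ancestral graph that is not maximal: the vertices 2 and 4 are not adjacent in H, yet for every subset S ⊆ {1,3,5}, the vertices 2 and 4 are m-connected given S in H. -/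
open MeasureTheory ProbabilityTheory

open MixedGraph

/-- The mixed graph `H` on `{1,2,3,4,5}` with directed edges 5→4, 1→2, 3→4 and
bidirected edges 1↔5, 2↔5, 3↔5, 1↔3, 2↔3, 1↔4
(vertex `v` is encoded as `v - 1 : Fin 5`). -/
def exH : MixedGraph (Fin 5) where
  dir i j := (i = 4 ∧ j = 3) ∨ (i = 0 ∧ j = 1) ∨ (i = 2 ∧ j = 3)
  bidir i j :=
    (i = 0 ∧ j = 4) ∨ (i = 4 ∧ j = 0) ∨ (i = 1 ∧ j = 4) ∨ (i = 4 ∧ j = 1) ∨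
    (i = 2 ∧ j = 4) ∨ (i = 4 ∧ j = 2) ∨ (i = 0 ∧ j = 2) ∨ (i = 2 ∧ j = 0) ∨
    (i = 1 ∧ j = 2) ∨ (i = 2 ∧ j = 1) ∨ (i = 0 ∧ j = 3) ∨ (i = 3 ∧ j = 0)
  bidir_symm := by decide
  dir_irrefl := by decide
  bidir_irrefl := by decide
  not_dir_dir := by decide
  not_dir_bidir := by decide

/-! No vertex of `exH` is both the head and the tail of a directed edge, so every directed path
is a single edge and ancestrality reduces to conditions on edges. In the paper's labels, the
non-adjacent vertices 2 and 4 are joined by `2 ↔ 3 → 4` if `3 ∉ S`, by `2 ← 1 ↔ 4` if `1 ∉ S`,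
and by the path `2 ↔ 3 ↔ 1 ↔ 4`, whose inner vertices are colliders, if `1, 3 ∈ S`. -/

namespace MixedGraph

variable {V : Type*} (G : MixedGraph V)

theorem strAnc_iff_dir_of_no_dir_dir (h : ∀ a b c, G.dir a b → G.dir b c → False) {i j : V} :
    G.StrAnc i j ↔ G.dir i j := by
  refine ⟨fun hij => ?_, Relation.TransGen.single⟩
  induction hij with
  | single hab => exact hab
  | tail _ hbc ih => exact (h _ _ _ ih hbc).elim

theorem isAncestral_of_no_dir_dir (h : ∀ a b c, G.dir a b → G.dir b c → False) :
    G.IsAncestral := by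
  simp only [IsAncestral, Acyclic, G.strAnc_iff_dir_of_no_dir_dir h]
  exact ⟨G.dir_irrefl, fun i j hb hd => G.not_dir_bidir i j hd hb⟩

theorem not_isMaximal_of_forall_mConnecting {i j : V} (hij : i ≠ j) (hadj : ¬ G.adj i j)
    (h : ∀ S : Set V, i ∉ S → j ∉ S → ∃ p : MPath G i j, G.MConnecting S p) :
    ¬ G.IsMaximal := fun hmax => by
  obtain ⟨S, hi, hj, hsep⟩ := hmax i j hij hadj
  obtain ⟨p, hp⟩ := h S hi hj
  exact hsep i rfl j rfl p hp

variable {G} {a b : V}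

theorem mConnecting_of_verts_eq_three {C : Set V} {k : V} {p : MPath G a b}
    (hp : p.verts = [a, k, b]) (hcol : ¬ G.IsCollider a k b) (hk : k ∉ C) :
    G.MConnecting C p := by
  intro m hm
  simp only [hp, List.length_cons, List.length_nil] at hm ⊢
  obtain rfl : m = 0 := by omega
  exact ⟨fun h => (hcol h).elim, fun _ => hk⟩

theorem mConnecting_of_verts_eq_four {C : Set V} {k l : V} {p : MPath G a b}
    (hp : p.verts = [a, k, l, b]) (hk : G.IsCollider a k l) (hl : G.IsCollider k l b)
    (hkC : k ∈ C) (hlC : l ∈ C) : G.MConnecting C p := by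
  intro m hm
  simp only [hp, List.length_cons, List.length_nil] at hm ⊢
  obtain rfl | rfl : m = 0 ∨ m = 1 := by omega
  · exact ⟨fun _ => ⟨k, hkC, .refl⟩, fun h => (h hk).elim⟩
  · exact ⟨fun _ => ⟨l, hlC, .refl⟩, fun h => (h hl).elim⟩

end MixedGraph

instance : DecidableRel exH.dir := fun i j =>
  inferInstanceAs (Decidable ((i = 4 ∧ j = 3) ∨ (i = 0 ∧ j = 1) ∨ (i = 2 ∧ j = 3)))

instance : DecidableRel exH.bidir := fun i j =>
  inferInstanceAs (Decidable
    ((i = 0 ∧ j = 4) ∨ (i = 4 ∧ j = 0) ∨ (i = 1 ∧ j = 4) ∨ (i = 4 ∧ j = 1) ∨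
    (i = 2 ∧ j = 4) ∨ (i = 4 ∧ j = 2) ∨ (i = 0 ∧ j = 2) ∨ (i = 2 ∧ j = 0) ∨
    (i = 1 ∧ j = 2) ∨ (i = 2 ∧ j = 1) ∨ (i = 0 ∧ j = 3) ∨ (i = 3 ∧ j = 0)))

instance : DecidableRel exH.adj := fun i j =>
  inferInstanceAs (Decidable (exH.dir i j ∨ exH.dir j i ∨ exH.bidir i j))

instance (x k y : Fin 5) : Decidable (exH.IsCollider x k y) :=
  inferInstanceAs (Decidable ((exH.dir x k ∨ exH.bidir x k) ∧ (exH.dir y k ∨ exH.bidir y k)))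

theorem exH_exists_mConnecting (S : Set (Fin 5)) :
    ∃ p : MPath exH 1 3, exH.MConnecting S p := by
  by_cases h2 : (2 : Fin 5) ∈ S
  · by_cases h0 : (0 : Fin 5) ∈ S
    · exact ⟨⟨[1, 2, 0, 3], List.cons_ne_nil _ _, rfl, rfl, by decide,
          show List.IsChain _ _ by decide⟩,
        mConnecting_of_verts_eq_four rfl (by decide) (by decide) h2 h0⟩
    · exact ⟨⟨[1, 0, 3], List.cons_ne_nil _ _, rfl, rfl, by decide,
          show List.IsChain _ _ by decide⟩,
        mConnecting_of_verts_eq_three rfl (by decide) h0⟩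
  · exact ⟨⟨[1, 2, 3], List.cons_ne_nil _ _, rfl, rfl, by decide,
        show List.IsChain _ _ by decide⟩,
      mConnecting_of_verts_eq_three rfl (by decide) h2⟩

/-- Example 2: `exH` is a directed ancestral graph that is not
maximal: the vertices 2 and 4 are not adjacent, yet they are m-connected given every
subset `S ⊆ {1, 3, 5}` (vertex `v` is encoded as `v - 1 : Fin 5`). -/
theorem example_not_maximal :
    exH.IsAncestral ∧ ¬ exH.IsMaximal ∧ ¬ exH.adj 1 3 ∧
    (∀ S : Set (Fin 5), S ⊆ {0, 2, 4} → exH.MConn 1 3 S) :=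
  ⟨exH.isAncestral_of_no_dir_dir (by decide),
    exH.not_isMaximal_of_forall_mConnecting (by decide) (by decide)
      fun S _ _ => exH_exists_mConnecting S,
    by decide,
    fun S _ => .inl (exH_exists_mConnecting S)⟩
end
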